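/- Let ψ, ν ∈ Ψ and define, for u ≥ e², N_ψ(u) = exp(sup_{p ≥ 2} p·(log u − log ψ(p))) and N_ν(u) = exp(sup_{p ≥ 2} p·(log u − log ν(p))). Then lim_{p → ∞} ψ(p)/ν(p) = 0 if and only if N_ψ is essentially greater than N_ν, i.e. for every λ > 0 one has lim_{u → ∞} N_ν(λu)/N_ψ(u) = 0. -/

import Mathlib

/-!
With `f(p) = p log ψ(p)`, `log N_ψ(eᵗ) = sup_{p ≥ 2} (p t - f(p))` is the Legendre transform of
`f` on `[2, ∞)`.

If `log ν - log ψ → ∞`, then in `log N_ν(e^{t+c})` the terms of large index `q` lose an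
arbitrarily large amount against the same terms for `ψ`, while the terms with `q ≤ P` grow with
slope at most `P` in `t`, against the term `P + 1` of `log N_ψ(eᵗ)`, of slope `P + 1`. Hence
`log N_ν(λ eᵗ) - log N_ψ(eᵗ) → -∞`.

Conversely, if `ν(p) ≤ λ ψ(p)` for arbitrarily large `p`, let `t` be the right derivative of the
convex function `f` at such a `p`. Then the supremum defining `log N_ψ(eᵗ)` is attained at `p`,
and its term `p` is at most the term `p` of `log N_ν(λ eᵗ)`, so `N_ν(λ eᵗ) ≥ N_ψ(eᵗ)`; and
`t ≥ log ψ(p) - |log ψ(2)|` is large because `ψ → ∞`.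
-/

open MeasureTheory Filter Set
open scoped ENNReal Topology

/-- `ψ` belongs to the class `Ψ`: `p ↦ p·log ψ(p)` is continuous, convex, increasing,
tends to `+∞`, and `ψ(p) → ∞` as `p → ∞`; `ψ` is positive on `[2,∞)`. -/
structure PsiClass (ψ : ℝ → ℝ) : Prop where
  pos : ∀ p : ℝ, 2 ≤ p → 0 < ψ p
  cont : ContinuousOn (fun p => p * Real.log (ψ p)) (Set.Ici 2)
  convex : ConvexOn ℝ (Set.Ici 2) (fun p => p * Real.log (ψ p))
  mono : MonotoneOn (fun p => p * Real.log (ψ p)) (Set.Ici 2)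
  tendsto_top : Filter.Tendsto (fun p => p * Real.log (ψ p)) Filter.atTop Filter.atTop
  psi_tendsto_top : Filter.Tendsto ψ Filter.atTop Filter.atTop

/-- `N_ψ(u) = exp( sup_{p ≥ 2} p·(log u − log ψ(p)) )`. -/
noncomputable def Nfun (ψ : ℝ → ℝ) (u : ℝ) : ℝ :=
  Real.exp (sSup {v | ∃ p : ℝ, 2 ≤ p ∧ v = p * (Real.log u - Real.log (ψ p))})

open Real

theorem ConvexOn.le_add_rightDeriv_mul {S : Set ℝ} {f : ℝ → ℝ} {x y : ℝ}
    (hf : ConvexOn ℝ S f) (hx : x ∈ interior S) (hy : y ∈ S) :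
    f x + derivWithin f (Ioi x) x * (y - x) ≤ f y := by
  rcases lt_trichotomy y x with hyx | rfl | hxy
  · have h := (hf.slope_le_leftDeriv_of_mem_interior hy hx hyx).trans
      (hf.leftDeriv_le_rightDeriv_of_mem_interior hx)
    rw [slope_def_field, div_le_iff₀ (sub_pos.mpr hyx)] at h
    linarith
  · simp
  · have h := hf.rightDeriv_le_slope_of_mem_interior hx hy hxy
    rw [slope_def_field, le_div_iff₀ (sub_pos.mpr hxy)] at h
    linarith

theorem tendsto_log_sub_log_atTop_of_div {α : Type*} {l : Filter α} {f g : α → ℝ}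
    (hf : ∀ᶠ x in l, 0 < f x) (hg : ∀ᶠ x in l, 0 < g x)
    (h : Tendsto (fun x => f x / g x) l (𝓝 0)) :
    Tendsto (fun x => log (g x) - log (f x)) l atTop := by
  have hdiv : Tendsto (fun x => f x / g x) l (𝓝[>] 0) :=
    tendsto_nhdsWithin_iff.mpr ⟨h, by filter_upwards [hf, hg] with x hfx hgx using div_pos hfx hgx⟩
  refine (tendsto_neg_atBot_atTop.comp (tendsto_log_nhdsGT_zero.comp hdiv)).congr' ?_
  filter_upwards [hf, hg] with x hfx hgx
  simp [log_div hfx.ne' hgx.ne']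

theorem exists_frequently_le_mul_of_not_tendsto {α : Type*} {l : Filter α} {f g : α → ℝ}
    (hf : ∀ᶠ x in l, 0 < f x) (hg : ∀ᶠ x in l, 0 < g x)
    (h : ¬Tendsto (fun x => f x / g x) l (𝓝 0)) :
    ∃ c > 0, ∃ᶠ x in l, g x ≤ c * f x := by
  have hlow : ∀ a < (0 : ℝ), ∀ᶠ x in l, a < f x / g x := fun a ha => by
    filter_upwards [hf, hg] with x hfx hgx
    exact ha.trans (by positivity)
  obtain ⟨ε, hε, hfreq⟩ : ∃ ε > 0, ∃ᶠ x in l, ε ≤ f x / g x := by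
    by_contra! hne
    refine h (tendsto_order.mpr ⟨hlow, fun ε hε => ?_⟩)
    simpa only [not_frequently, not_le] using hne ε hε
  refine ⟨ε⁻¹, inv_pos.mpr hε, (hfreq.and_eventually hg).mono fun x ⟨hx, hgx⟩ => ?_⟩
  rw [le_div_iff₀ hgx] at hx
  rw [inv_mul_eq_div, le_div_iff₀ hε]
  linarith

/-- `Nfun ψ u = exp (logNfun ψ (log u))` holds definitionally. -/
noncomputable def logNfun (ψ : ℝ → ℝ) (t : ℝ) : ℝ :=
  sSup {v | ∃ p : ℝ, 2 ≤ p ∧ v = p * (t - log (ψ p))}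

theorem logNfun_le {ψ : ℝ → ℝ} {t b : ℝ} (h : ∀ p, 2 ≤ p → p * (t - log (ψ p)) ≤ b) :
    logNfun ψ t ≤ b :=
  csSup_le ⟨_, 2, le_rfl, rfl⟩ fun _ ⟨p, hp, hv⟩ => hv ▸ h p hp

theorem Nfun_mul_div_Nfun {ψ ν : ℝ → ℝ} {lam u : ℝ} (hlam : 0 < lam) (hu : 0 < u) :
    Nfun ν (lam * u) / Nfun ψ u = exp (logNfun ν (log u + log lam) - logNfun ψ (log u)) := by
  rw [exp_sub, add_comm, ← log_mul hlam.ne' hu.ne']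
  rfl

namespace PsiClass

variable {ψ ν : ℝ → ℝ}

theorem eventually_pos (hψ : PsiClass ψ) : ∀ᶠ p in atTop, 0 < ψ p :=
  eventually_atTop.mpr ⟨2, hψ.pos⟩

theorem two_mul_log_le (hψ : PsiClass ψ) {p : ℝ} (hp : 2 ≤ p) :
    2 * log (ψ 2) ≤ p * log (ψ p) :=
  hψ.mono self_mem_Ici (mem_Ici.mpr hp) hp

theorem bddAbove_logNfun_set (hψ : PsiClass ψ) (t : ℝ) :
    BddAbove {v | ∃ p : ℝ, 2 ≤ p ∧ v = p * (t - log (ψ p))} := by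
  obtain ⟨p₁, hp₁⟩ := eventually_atTop.mp (hψ.psi_tendsto_top.eventually_ge_atTop (exp t))
  refine ⟨max 0 (p₁ * |t| - 2 * log (ψ 2)), ?_⟩
  rintro v ⟨p, hp, rfl⟩
  rcases le_or_gt p₁ p with hp₁p | hpp₁
  · have : t ≤ log (ψ p) := (le_log_iff_exp_le (hψ.pos p hp)).mpr (hp₁ p hp₁p)
    exact (mul_nonpos_of_nonneg_of_nonpos (by linarith) (by linarith)).trans (le_max_left _ _)
  · have : p * t ≤ p₁ * |t| := by
      nlinarith [le_abs_self t, abs_nonneg t]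
    have := hψ.two_mul_log_le hp
    exact le_max_of_le_right (by linarith)

theorem le_logNfun (hψ : PsiClass ψ) (t : ℝ) {p : ℝ} (hp : 2 ≤ p) :
    p * (t - log (ψ p)) ≤ logNfun ψ t :=
  le_csSup (hψ.bddAbove_logNfun_set t) ⟨p, hp, rfl⟩

theorem tendsto_logNfun_sub_atBot (hψ : PsiClass ψ) (hν : PsiClass ν)
    (h : Tendsto (fun p => log (ν p) - log (ψ p)) atTop atTop) (c : ℝ) :
    Tendsto (fun t => logNfun ν (t + c) - logNfun ψ t) atTop atBot := by
  refine tendsto_atBot.mpr fun b => ?_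
  set D := max 0 (-b / 2)
  have hD : 0 ≤ D := le_max_left _ _
  have hDb : -2 * D ≤ b := by linarith [le_max_right 0 (-b / 2)]
  obtain ⟨p₁, hp₁⟩ := eventually_atTop.mp (h.eventually_ge_atTop (c + D))
  set P := max p₁ 2
  have hP : 2 ≤ P := le_max_right _ _
  have hlow := hψ.le_logNfun
  filter_upwards [eventually_ge_atTop (-c),
    eventually_ge_atTop (P * c - 2 * log (ν 2) + (P + 1) * log (ψ (P + 1)) - b)] with t htc htP
  suffices ∀ q, 2 ≤ q → q * (t + c - log (ν q)) ≤ logNfun ψ t + b by linarith [logNfun_le this]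
  intro q hq
  rcases le_or_gt P q with hPq | hqP
  · -- `log ν q ≥ log ψ q + c + D`: the term `q` loses at least `q D ≥ 2 D` against `ψ`
    have hlog := hp₁ q ((le_max_left _ _).trans hPq)
    have := hlow t hq
    nlinarith
  · -- bounded `q`: slope at most `P` in `t`, against slope `P + 1` for the term `P + 1` of `ψ`
    have := hlow t (show 2 ≤ P + 1 by linarith)
    have := hν.two_mul_log_le hq
    nlinarith

theorem frequently_logNfun_le (hψ : PsiClass ψ) (hν : PsiClass ν) {c : ℝ}
    (h : ∃ᶠ p in atTop, log (ν p) ≤ c + log (ψ p)) :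
    ∃ᶠ t in atTop, logNfun ψ t ≤ logNfun ν (t + c) := by
  rw [frequently_atTop]
  intro T
  have hlarge : ∀ᶠ p in atTop, 2 < p ∧ T + |log (ψ 2)| ≤ log (ψ p) :=
    (eventually_gt_atTop 2).and
      ((tendsto_log_atTop.comp hψ.psi_tendsto_top).eventually_ge_atTop _)
  obtain ⟨p, hpν, hp, hpT⟩ := (h.and_eventually hlarge).exists
  set t := derivWithin (fun p => p * log (ψ p)) (Ioi p) p
  have hsub : ∀ q, 2 ≤ q → p * log (ψ p) + t * (q - p) ≤ q * log (ψ q) := fun q hq =>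
    hψ.convex.le_add_rightDeriv_mul (by simpa using hp) (mem_Ici.mpr hq)
  refine ⟨t, ?_, ?_⟩
  · have h2 := hsub 2 le_rfl
    have := hψ.two_mul_log_le hp.le
    have ht : 0 ≤ t := by nlinarith
    have : log (ψ p) - |log (ψ 2)| ≤ t := by
      nlinarith [le_abs_self (log (ψ 2)), neg_abs_le (log (ψ 2))]
    linarith
  · calc logNfun ψ t ≤ p * (t - log (ψ p)) := logNfun_le fun q hq => by nlinarith [hsub q hq]
      _ ≤ p * (t + c - log (ν p)) := mul_le_mul_of_nonneg_left (by linarith) (by linarith)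
      _ ≤ logNfun ν (t + c) := hν.le_logNfun _ hp.le

end PsiClass

theorem stmt5 (ψ ν : ℝ → ℝ) (hψ : PsiClass ψ) (hν : PsiClass ν) :
    Filter.Tendsto (fun p => ψ p / ν p) Filter.atTop (𝓝 0) ↔
      ∀ lam : ℝ, 0 < lam →
        Filter.Tendsto (fun u => Nfun ν (lam * u) / Nfun ψ u) Filter.atTop (𝓝 0) := by
  constructor
  · intro h lam hlam
    have hlog := tendsto_log_sub_log_atTop_of_div hψ.eventually_pos hν.eventually_pos h
    refine (tendsto_exp_atBot.comp ((hψ.tendsto_logNfun_sub_atBot hν hlog (log lam)).comp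
      tendsto_log_atTop)).congr' ?_
    filter_upwards [eventually_gt_atTop 0] with u hu
    exact (Nfun_mul_div_Nfun hlam hu).symm
  · intro hN
    by_contra hlim
    obtain ⟨lam, hlam, hfreq⟩ :=
      exists_frequently_le_mul_of_not_tendsto hψ.eventually_pos hν.eventually_pos hlim
    have hlog : ∃ᶠ p in atTop, log (ν p) ≤ log lam + log (ψ p) := by
      refine (hfreq.and_eventually (hν.eventually_pos.and hψ.eventually_pos)).mono ?_
      rintro p ⟨hp, hνp, hψp⟩
      rw [← log_mul hlam.ne' hψp.ne']
      exact log_le_log hνp hp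
    have hge : ∃ᶠ u in atTop, 1 ≤ Nfun ν (lam * u) / Nfun ψ u :=
      tendsto_exp_atTop.frequently <| (hψ.frequently_logNfun_le hν hlog).mono fun t ht => by
        rw [Nfun_mul_div_Nfun hlam (exp_pos t), log_exp]
        exact one_le_exp (sub_nonneg.mpr ht)
    exact hge ((hN lam hlam).eventually (gt_mem_nhds one_pos) |>.mono fun _ => not_le.mpr)
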